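/- Descent of the quadratic-rig objective under the proposed surrogate: Let B ∈ ℝ^{3n×m} with rows B_i, let D^(1), …, D^(3n) ∈ ℝ^{m×m} be symmetric, let b̂ ∈ ℝ^{3n}, and let α ≥ 0. Define F(u) := ∑_{i=1}^{3n} (B_i u + uᵀ D^(i) u − b̂_i)² + α ∑_{j=1}^m u_j. Let w ∈ [0,1]^m and let ψ(v) := ∑_{i=1}^{3n} ψ_i(v) + α ∑_{j=1}^m (w_j + v_j) be the surrogate built from w as in Proposition 2. If v* minimizes ψ over the set {v ∈ ℝ^m : 0 ≤ w + v ≤ 1} (entrywise), then F(w + v*) ≤ F(w). -/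

import Mathlib

/-!
Majorization–minimization. Each residual is quadratic in the step: for symmetric `D`,
`r(w + v) = g + ⟪h, v⟫ + vᵀ D v`. Squaring and using `(a + c)² ≤ 2a² + 2c²`, the Rayleigh bound
`g · vᵀ D v ≤ g λ_M(D, g) ‖v‖²` (the sign of `g` decides which extreme eigenvalue is needed),
Cauchy–Schwarz `⟪h, v⟫² ≤ ‖h‖² ‖v‖²` and `(vᵀ D v)² ≤ σ(D)² ‖v‖⁴ ≤ m σ(D)² ∑ v_j⁴` shows that
`ψ` majorizes `F (w + ·)`, with equality at `v = 0`. Since `v = 0` is feasible,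
`F (w + v*) ≤ ψ v* ≤ ψ 0 = F w`.
-/

/-- The smallest eigenvalue of a real symmetric (Hermitian) matrix. -/
noncomputable def lamMin {m : ℕ} {D : Matrix (Fin m) (Fin m) ℝ} (hD : D.IsHermitian) : ℝ :=
  ⨅ i, hD.eigenvalues i

/-- The largest eigenvalue of a real symmetric (Hermitian) matrix. -/
noncomputable def lamMax {m : ℕ} {D : Matrix (Fin m) (Fin m) ℝ} (hD : D.IsHermitian) : ℝ :=
  ⨆ i, hD.eigenvalues i

/-- `λ_M(D, g)`: the smallest eigenvalue if `g < 0`, the largest if `g ≥ 0`. -/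
noncomputable def lamM {m : ℕ} {D : Matrix (Fin m) (Fin m) ℝ} (hD : D.IsHermitian)
    (g : ℝ) : ℝ :=
  if g < 0 then lamMin hD else lamMax hD

/-- `σ(D)`: the largest singular value of `D`, i.e. the operator norm of `D`
with respect to the Euclidean norm. -/
noncomputable def sigmaOp {m : ℕ} (D : Matrix (Fin m) (Fin m) ℝ) : ℝ :=
  ‖Matrix.toEuclideanCLM (𝕜 := ℝ) D‖

open Matrix
open scoped RealInnerProductSpace

theorem Matrix.IsSymm.dotProduct_mulVec_comm {R ι : Type*} [CommSemiring R] [Fintype ι]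
    {D : Matrix ι ι R} (hD : D.IsSymm) (x y : ι → R) : x ⬝ᵥ D *ᵥ y = y ⬝ᵥ D *ᵥ x := by
  rw [dotProduct_mulVec, ← mulVec_transpose, hD.eq, dotProduct_comm]

namespace Matrix.IsHermitian

theorem dotProduct_mulVec_eq_sum_eigenvalues {ι : Type*} [Fintype ι] [DecidableEq ι]
    {D : Matrix ι ι ℝ} (hD : D.IsHermitian) (v : EuclideanSpace ℝ ι) :
    v ⬝ᵥ D *ᵥ v = ∑ j, hD.eigenvalues j * ⟪hD.eigenvectorBasis j, v⟫ ^ 2 := by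
  set b := hD.eigenvectorBasis
  have h_inner_mulVec (j) : ⟪b j, WithLp.toLp 2 (D *ᵥ v)⟫ = hD.eigenvalues j * ⟪b j, v⟫ := by
    simp only [EuclideanSpace.inner_eq_star_dotProduct, star_trivial]
    rw [dotProduct_comm, (isHermitian_iff_isSymm.mp hD).dotProduct_mulVec_comm,
      hD.mulVec_eigenvectorBasis, dotProduct_smul, smul_eq_mul]
  calc v ⬝ᵥ D *ᵥ v = ⟪v, WithLp.toLp 2 (D *ᵥ v)⟫ := by
        simp only [EuclideanSpace.inner_eq_star_dotProduct, star_trivial, dotProduct_comm]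
    _ = ∑ j, ⟪v, b j⟫ * ⟪b j, WithLp.toLp 2 (D *ᵥ v)⟫ := (b.sum_inner_mul_inner _ _).symm
    _ = _ := by
        simp only [h_inner_mulVec, real_inner_comm v]
        exact Finset.sum_congr rfl fun j _ => by ring

variable {m : ℕ} {D : Matrix (Fin m) (Fin m) ℝ}

theorem lamMin_mul_norm_sq_le (hD : D.IsHermitian) (v : EuclideanSpace ℝ (Fin m)) :
    lamMin hD * ‖v‖ ^ 2 ≤ v ⬝ᵥ D *ᵥ v := by
  rw [hD.dotProduct_mulVec_eq_sum_eigenvalues, ← hD.eigenvectorBasis.sum_sq_inner_right,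
    Finset.mul_sum]
  gcongr with j
  exact ciInf_le (Set.finite_range _).bddBelow j

theorem dotProduct_mulVec_le_lamMax_mul_norm_sq (hD : D.IsHermitian)
    (v : EuclideanSpace ℝ (Fin m)) : v ⬝ᵥ D *ᵥ v ≤ lamMax hD * ‖v‖ ^ 2 := by
  rw [hD.dotProduct_mulVec_eq_sum_eigenvalues, ← hD.eigenvectorBasis.sum_sq_inner_right,
    Finset.mul_sum]
  gcongr with j
  exact le_ciSup (Set.finite_range _).bddAbove j

theorem mul_dotProduct_mulVec_le_lamM (hD : D.IsHermitian) (g : ℝ)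
    (v : EuclideanSpace ℝ (Fin m)) :
    g * (v ⬝ᵥ D *ᵥ v) ≤ g * lamM hD g * ‖v‖ ^ 2 := by
  rw [mul_assoc, lamM]
  split_ifs with hg
  · exact mul_le_mul_of_nonpos_left (hD.lamMin_mul_norm_sq_le v) hg.le
  · exact mul_le_mul_of_nonneg_left (hD.dotProduct_mulVec_le_lamMax_mul_norm_sq v) (not_lt.mp hg)

end Matrix.IsHermitian

theorem abs_dotProduct_mulVec_le_sigmaOp {m : ℕ} (D : Matrix (Fin m) (Fin m) ℝ)
    (v : EuclideanSpace ℝ (Fin m)) : |v ⬝ᵥ D *ᵥ v| ≤ sigmaOp D * ‖v‖ ^ 2 := by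
  have hv : v ⬝ᵥ D *ᵥ v = ⟪v, Matrix.toEuclideanCLM (𝕜 := ℝ) D v⟫ := by
    simp only [EuclideanSpace.inner_eq_star_dotProduct, star_trivial, dotProduct_comm]
    rfl
  calc |v ⬝ᵥ D *ᵥ v| ≤ ‖v‖ * ‖Matrix.toEuclideanCLM (𝕜 := ℝ) D v‖ :=
        hv ▸ abs_real_inner_le_norm _ _
    _ ≤ ‖v‖ * (sigmaOp D * ‖v‖) := by
        gcongr
        exact (Matrix.toEuclideanCLM (𝕜 := ℝ) D).le_opNorm v
    _ = sigmaOp D * ‖v‖ ^ 2 := by ring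

theorem residual_add_eq {R ι : Type*} [CommRing R] [Fintype ι] {D : Matrix ι ι R}
    (hD : D.IsSymm) (b w v : ι → R) (c : R) :
    b ⬝ᵥ (w + v) + (w + v) ⬝ᵥ D *ᵥ (w + v) - c
      = (b ⬝ᵥ w + w ⬝ᵥ D *ᵥ w - c) + ∑ j, (b j + 2 * (w ᵥ* D) j) * v j + v ⬝ᵥ D *ᵥ v := by
  have hcross : ∑ j, (b j + 2 * (w ᵥ* D) j) * v j = b ⬝ᵥ v + 2 * (w ⬝ᵥ D *ᵥ v) := by
    rw [dotProduct_mulVec]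
    simp only [dotProduct, add_mul, Finset.sum_add_distrib, Finset.mul_sum, mul_assoc]
  rw [hcross, mulVec_add, dotProduct_add, add_dotProduct, dotProduct_add, dotProduct_add,
    hD.dotProduct_mulVec_comm v w]
  ring

theorem sq_residual_add_le_surrogate {m : ℕ} {D : Matrix (Fin m) (Fin m) ℝ} (hD : D.IsHermitian)
    (b : Fin m → ℝ) (c : ℝ) (w v : EuclideanSpace ℝ (Fin m)) :
    let g := dotProduct b w + dotProduct w (D.mulVec w) - c
    let h : EuclideanSpace ℝ (Fin m) :=
      WithLp.toLp 2 (fun j => b j + 2 * Matrix.vecMul w D j : Fin m → ℝ)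
    (dotProduct b (w + v) + dotProduct (w + v) (D.mulVec (w + v)) - c) ^ 2
      ≤ g ^ 2 + 2 * g * ∑ j, h j * v j + 2 * (g * lamM hD g + ‖h‖ ^ 2) * ∑ j, v j ^ 2
        + 2 * m * sigmaOp D ^ 2 * ∑ j, v j ^ 4 := by
  intro g h
  set A := ∑ j, h j * v j
  set C := v ⬝ᵥ D *ᵥ v
  have hA : A ^ 2 ≤ ‖h‖ ^ 2 * ‖v‖ ^ 2 := by
    have hA_inner : A = ⟪h, v⟫ := by
      rw [EuclideanSpace.inner_eq_star_dotProduct, star_trivial, dotProduct_comm]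
      rfl
    rw [hA_inner, ← mul_pow, ← sq_abs]
    exact pow_le_pow_left₀ (abs_nonneg _) (abs_real_inner_le_norm h v) 2
  have hC : C ^ 2 ≤ sigmaOp D ^ 2 * (‖v‖ ^ 2) ^ 2 := by
    rw [← mul_pow, ← sq_abs]
    exact pow_le_pow_left₀ (abs_nonneg _) (abs_dotProduct_mulVec_le_sigmaOp D v) 2
  have hv4 : (‖v‖ ^ 2) ^ 2 ≤ m * ∑ j, v j ^ 4 := by
    calc (‖v‖ ^ 2) ^ 2 ≤ (Finset.univ : Finset (Fin m)).card * ∑ j, (v j ^ 2) ^ 2 := by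
          rw [EuclideanSpace.real_norm_sq_eq]; exact sq_sum_le_card_mul_sum_sq
      _ = m * ∑ j, v j ^ 4 := by simp [← pow_mul]
  have hgC := hD.mul_dotProduct_mulVec_le_lamM g v
  rw [WithLp.ofLp_add, residual_add_eq (isHermitian_iff_isSymm.mp hD),
    ← EuclideanSpace.real_norm_sq_eq]
  have hσ : 0 ≤ sigmaOp D ^ 2 := sq_nonneg _
  calc (g + A + C) ^ 2 ≤ g ^ 2 + 2 * g * A + 2 * (g * C) + 2 * A ^ 2 + 2 * C ^ 2 := by
        linear_combination sq_nonneg (A - C)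
    _ ≤ _ := by
        linear_combination 2 * hgC + 2 * hA + 2 * hC + 2 * mul_le_mul_of_nonneg_left hv4 hσ

theorem surrogate_minimizer_descent_general {n m : ℕ} (B : Matrix (Fin (3 * n)) (Fin m) ℝ)
    (D : Fin (3 * n) → Matrix (Fin m) (Fin m) ℝ) (hD : ∀ i, (D i).IsHermitian)
    (bhat : Fin (3 * n) → ℝ) (α : ℝ)
    (w : EuclideanSpace ℝ (Fin m)) (hw : ∀ j, 0 ≤ w j ∧ w j ≤ 1)
    (vstar : EuclideanSpace ℝ (Fin m)) :
    let F : EuclideanSpace ℝ (Fin m) → ℝ := fun u =>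
      (∑ i, (dotProduct (B i) u + dotProduct u ((D i).mulVec u) - bhat i) ^ 2)
        + α * ∑ j, u j
    let g : Fin (3 * n) → ℝ := fun i =>
      dotProduct (B i) w + dotProduct w ((D i).mulVec w) - bhat i
    let h : Fin (3 * n) → EuclideanSpace ℝ (Fin m) := fun i =>
      WithLp.toLp 2 (fun j => B i j + 2 * Matrix.vecMul w (D i) j : Fin m → ℝ)
    let ψ : EuclideanSpace ℝ (Fin m) → ℝ := fun v =>
      (∑ i, (g i ^ 2 + 2 * g i * ∑ j, h i j * v j
        + 2 * (g i * lamM (hD i) (g i) + ‖h i‖ ^ 2) * ∑ j, v j ^ 2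
        + 2 * m * sigmaOp (D i) ^ 2 * ∑ j, v j ^ 4))
        + α * ∑ j, (w j + v j)
    (∀ j, 0 ≤ w j + vstar j ∧ w j + vstar j ≤ 1) →
    (∀ v : EuclideanSpace ℝ (Fin m),
      (∀ j, 0 ≤ w j + v j ∧ w j + v j ≤ 1) → ψ vstar ≤ ψ v) →
    F (w + vstar) ≤ F w := by
  intro F g h ψ _ hmin
  calc F (w + vstar) ≤ ψ vstar :=
        add_le_add (Finset.sum_le_sum fun i _ =>
          sq_residual_add_le_surrogate (hD i) (B i) (bhat i) w vstar) le_rfl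
    _ ≤ ψ 0 := hmin 0 (by simpa using hw)
    _ = F w := by simp [ψ, F, g]

/-- Descent of the quadratic-rig objective under the proposed surrogate. -/
theorem surrogate_minimizer_descent {n m : ℕ} (B : Matrix (Fin (3 * n)) (Fin m) ℝ)
    (D : Fin (3 * n) → Matrix (Fin m) (Fin m) ℝ) (hD : ∀ i, (D i).IsHermitian)
    (bhat : Fin (3 * n) → ℝ) (α : ℝ) (hα : 0 ≤ α)
    (w : EuclideanSpace ℝ (Fin m)) (hw : ∀ j, 0 ≤ w j ∧ w j ≤ 1)
    (vstar : EuclideanSpace ℝ (Fin m)) :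
    let F : EuclideanSpace ℝ (Fin m) → ℝ := fun u =>
      (∑ i, (dotProduct (B i) u + dotProduct u ((D i).mulVec u) - bhat i) ^ 2)
        + α * ∑ j, u j
    let g : Fin (3 * n) → ℝ := fun i =>
      dotProduct (B i) w + dotProduct w ((D i).mulVec w) - bhat i
    let h : Fin (3 * n) → EuclideanSpace ℝ (Fin m) := fun i =>
      WithLp.toLp 2 (fun j => B i j + 2 * Matrix.vecMul w (D i) j : Fin m → ℝ)
    let ψ : EuclideanSpace ℝ (Fin m) → ℝ := fun v =>
      (∑ i, (g i ^ 2 + 2 * g i * ∑ j, h i j * v j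
        + 2 * (g i * lamM (hD i) (g i) + ‖h i‖ ^ 2) * ∑ j, v j ^ 2
        + 2 * m * sigmaOp (D i) ^ 2 * ∑ j, v j ^ 4))
        + α * ∑ j, (w j + v j)
    (∀ j, 0 ≤ w j + vstar j ∧ w j + vstar j ≤ 1) →
    (∀ v : EuclideanSpace ℝ (Fin m),
      (∀ j, 0 ≤ w j + v j ∧ w j + v j ≤ 1) → ψ vstar ≤ ψ v) →
    F (w + vstar) ≤ F w :=
  surrogate_minimizer_descent_general B D hD bhat α w hw vstar
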